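/- For g = 6, with f = −48℘, (℘')² = 4℘³ − g₃, S(x,z) = z² − 880g₃ + 3520℘³, Q(x,z) = −16z℘, the second compatibility equation 8f²Q_x + 36zS_x + 9Q_xf_{xx} + 15f_xQ_{xx} + 2Qf_{xxx} + 2f(4Qf_x + 5Q_{xxx}) + 2Q_{xxxxx} = 0 holds identically. -/

import Mathlib

/-!
Differentiating `(℘')² = 4℘³ - g₃` gives `℘' (℘'' - 6℘²) = 0`. Since `℘` is entire, the identity
theorem leaves two cases: `℘` is constant, and every derivative in the equation vanishes, or
`℘'' = 6℘²`, whence `℘''' = 12℘℘'` and `℘⁽⁵⁾ = 360℘²℘'`. As `f` and `Q` are multiples of `℘`, the left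
side of the compatibility equation is `-32z (℘⁽⁵⁾ - 288℘℘''' - 576℘'℘'' + 6552℘²℘')`, which
vanishes in both cases.
-/

open Set

namespace Weierstrass

variable {p : ℂ → ℂ} {g3 : ℂ}

theorem deriv_mul_deriv_deriv_sub_eq_zero (hp : Differentiable ℂ p)
    (hode : ∀ x, deriv p x ^ 2 = 4 * p x ^ 3 - g3) (x : ℂ) :
    deriv p x * (deriv (deriv p) x - 6 * p x ^ 2) = 0 := by
  have h := congrArg (deriv · x) (funext hode)
  simp only [deriv_fun_pow (hp.deriv x), deriv_sub_const, deriv_const_mul_field',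
    deriv_fun_pow (hp x)] at h
  linear_combination h / 2

theorem deriv_eq_zero_or_deriv_deriv_eq (hp : Differentiable ℂ p)
    (hode : ∀ x, deriv p x ^ 2 = 4 * p x ^ 3 - g3) :
    deriv p = 0 ∨ deriv (deriv p) = fun x => 6 * p x ^ 2 := by
  have hpa : AnalyticOnNhd ℂ p univ := hp.differentiableOn.analyticOnNhd isOpen_univ
  have h := hpa.deriv.eq_zero_or_eq_zero_of_mul_eq_zero
    (hpa.deriv.deriv.sub (analyticOnNhd_const.mul (hpa.pow 2)))
    (fun x _ => deriv_mul_deriv_deriv_sub_eq_zero hp hode x) isPreconnected_univ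
  simpa [funext_iff, sub_eq_zero] using h

theorem iteratedDeriv_three_and_five (hp : Differentiable ℂ p)
    (h2 : deriv (deriv p) = fun x => 6 * p x ^ 2) :
    iteratedDeriv 3 p = (fun x => 12 * p x * deriv p x) ∧
      iteratedDeriv 5 p = fun x => 360 * p x ^ 2 * deriv p x := by
  have hp' := hp.deriv
  have h3 : iteratedDeriv 3 p = fun x => 12 * p x * deriv p x := by
    ext x
    rw [iteratedDeriv_succ, iteratedDeriv_succ, iteratedDeriv_one, h2,
      deriv_const_mul _ (by fun_prop)]
    simp [hp x]
    ring
  have h4 : iteratedDeriv 4 p = fun x => 12 * deriv p x ^ 2 + 72 * p x ^ 3 := by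
    ext x
    rw [iteratedDeriv_succ, h3, deriv_fun_mul (by fun_prop) (by fun_prop)]
    simp [h2, hp x]
    ring
  refine ⟨h3, ?_⟩
  ext x
  rw [iteratedDeriv_succ, h4, deriv_fun_add (by fun_prop) (by fun_prop)]
  simp [h2, hp x, hp' x]
  ring

theorem iteratedDeriv_succ_eq_zero_of_deriv_eq_zero (h : deriv p = 0) (n : ℕ) :
    iteratedDeriv (n + 1) p = 0 := by
  ext x
  simp [iteratedDeriv_succ', h]

theorem iteratedDeriv_five_eq (hp : Differentiable ℂ p)
    (hode : ∀ x, deriv p x ^ 2 = 4 * p x ^ 3 - g3) (x : ℂ) :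
    iteratedDeriv 5 p x = 288 * p x * iteratedDeriv 3 p x
      + 576 * deriv p x * iteratedDeriv 2 p x - 6552 * p x ^ 2 * deriv p x := by
  rcases deriv_eq_zero_or_deriv_deriv_eq hp hode with hconst | h2
  · simp [iteratedDeriv_succ_eq_zero_of_deriv_eq_zero hconst, hconst]
  · obtain ⟨h3, h5⟩ := iteratedDeriv_three_and_five hp h2
    rw [h3, h5, iteratedDeriv_succ, iteratedDeriv_one, h2]
    ring

end Weierstrass

/-- For the Halphen operator with `g = 6`, `f = -48℘`,
`S = z² - 880g₃ + 3520℘³`, `Q = -16z℘` satisfy the second compatibility equation. -/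
theorem stmt9 (p : ℂ → ℂ) (g3 z : ℂ) (hp : ContDiff ℂ ⊤ p)
    (hode : ∀ x, (deriv p x) ^ 2 = 4 * (p x) ^ 3 - g3) :
    let f : ℂ → ℂ := fun x => -48 * p x
    let S : ℂ → ℂ := fun x => z ^ 2 - 880 * g3 + 3520 * (p x) ^ 3
    let Q : ℂ → ℂ := fun x => -16 * z * p x
    ∀ x, 8 * (f x) ^ 2 * deriv Q x + 36 * z * deriv S x
        + 9 * deriv Q x * iteratedDeriv 2 f x + 15 * deriv f x * iteratedDeriv 2 Q x
        + 2 * Q x * iteratedDeriv 3 f x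
        + 2 * f x * (4 * Q x * deriv f x + 5 * iteratedDeriv 3 Q x)
        + 2 * iteratedDeriv 5 Q x = 0 := by
  intro f S Q x
  have hpd : Differentiable ℂ p := hp.differentiable (by simp)
  have hS : deriv S x = 10560 * p x ^ 2 * deriv p x := by
    simp [S, hpd x]
    ring
  simp only [f, Q, hS, iteratedDeriv_const_mul_field, deriv_const_mul_field']
  linear_combination (-32 * z) * Weierstrass.iteratedDeriv_five_eq hpd hode x
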